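/- Let f : ℝ → ℝ be differentiable and suppose f(x)·e^{x²} → 0 and f'(x)·e^{x²} → 0 as |x| → ∞. Fix σ > 0 and define G(μ) = ∫_ℝ f(μ + σ z) dγ(z), where γ = N(0,1) is the standard Gaussian measure on ℝ. Then for every μ ∈ ℝ, G is differentiable at μ with derivative G'(μ) = (1/σ) ∫_ℝ f(μ + σ z) · z dγ(z). -/

import Mathlib

/-!
The substitution `x = μ + σ z` turns `G(μ)` into `∫ f dN(μ, σ²) = ∫ φ_{μ,σ²}(x) f(x) dx`, which moves
the parameter `μ` from `f` into the Gaussian density, whose `μ`-derivative is `φ_{μ,σ²}(x) (x - μ) / σ²`.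
Since `|φ_{m,σ²}| ≤ (2πσ²)^{-1/2}`, this derivative is dominated, locally uniformly in `m`, by a
multiple of `(1 + |x|) |f x|`, which is integrable because `f = O(e^{-x²})`; so we may differentiate
under the integral sign, and substituting back gives the formula.
-/

open MeasureTheory ProbabilityTheory Filter
open scoped NNReal

lemma exists_abs_le_mul_exp_neg_sq_of_tendsto {g : ℝ → ℝ} (hg : Continuous g)
    (h : Tendsto (fun x => g x * Real.exp (x ^ 2)) (cocompact ℝ) (nhds 0)) :
    ∃ C, ∀ x, |g x| ≤ C * Real.exp (-x ^ 2) := by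
  let g₀ : ZeroAtInftyContinuousMap ℝ ℝ := ⟨⟨fun x => g x * Real.exp (x ^ 2), by fun_prop⟩, h⟩
  obtain ⟨C, hC⟩ := g₀.isBounded_range.exists_norm_le
  refine ⟨C, fun x => ?_⟩
  have hx : |g x| * Real.exp (x ^ 2) ≤ C := by
    simpa [g₀, abs_mul] using hC _ ⟨x, rfl⟩
  rwa [Real.exp_neg, ← div_eq_mul_inv, le_div_iff₀ (Real.exp_pos _)]

section GaussianBound

variable {g : ℝ → ℝ} {C : ℝ}

lemma integrable_of_abs_le_mul_exp_neg_sq (hg : AEStronglyMeasurable g)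
    (hC : ∀ x, |g x| ≤ C * Real.exp (-x ^ 2)) : Integrable g := by
  refine ((integrable_exp_neg_mul_sq one_pos).const_mul C).mono' hg (ae_of_all _ fun x => ?_)
  simpa using hC x

lemma integrable_mul_of_abs_le_mul_exp_neg_sq (hg : AEStronglyMeasurable g)
    (hC : ∀ x, |g x| ≤ C * Real.exp (-x ^ 2)) : Integrable fun x => x * g x := by
  refine ((integrable_mul_exp_neg_mul_sq one_pos).norm.const_mul C).mono'
    (aestronglyMeasurable_id.mul hg) (ae_of_all _ fun x => ?_)
  have := mul_le_mul_of_nonneg_left (hC x) (abs_nonneg x)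
  simp only [norm_mul, Real.norm_eq_abs, neg_mul, one_mul, abs_of_pos (Real.exp_pos _)]
  linarith

end GaussianBound

lemma gaussianPDFReal_le (μ : ℝ) (v : ℝ≥0) (x : ℝ) :
    gaussianPDFReal μ v x ≤ (√(2 * Real.pi * v))⁻¹ := by
  rw [gaussianPDFReal]
  refine mul_le_of_le_one_right (by positivity) (Real.exp_le_one_iff.mpr ?_)
  have : 0 ≤ (x - μ) ^ 2 / (2 * v) := by positivity
  linarith [neg_div (2 * (v : ℝ)) ((x - μ) ^ 2)]

lemma hasDerivAt_gaussianPDFReal_mean (μ : ℝ) (v : ℝ≥0) (x : ℝ) :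
    HasDerivAt (fun m => gaussianPDFReal m v x) (gaussianPDFReal μ v x * ((x - μ) / v)) μ := by
  have hexp : HasDerivAt (fun m => -(x - m) ^ 2 / (2 * v)) ((x - μ) / v) μ := by
    refine (((hasDerivAt_id' μ).const_sub x).fun_pow 2).fun_neg.div_const (2 * (v : ℝ))
      |>.congr_deriv ?_
    push_cast
    ring
  simpa only [gaussianPDFReal, mul_assoc] using hexp.exp.const_mul (√(2 * Real.pi * v))⁻¹

lemma hasDerivAt_integral_gaussianPDFReal_mul {f : ℝ → ℝ} (hf : Integrable f)
    (hf' : Integrable fun x => x * f x) (v : ℝ≥0) (μ : ℝ) :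
    HasDerivAt (fun m => ∫ x, gaussianPDFReal m v x * f x)
      (∫ x, gaussianPDFReal μ v x * ((x - μ) / v) * f x) μ := by
  set c := (√(2 * Real.pi * v))⁻¹
  let bound x := c / v * (|x * f x| + (|μ| + 1) * |f x|)
  have hbound : Integrable bound := (hf'.abs.add (hf.abs.const_mul _)).const_mul _
  have hmeas : ∀ m, AEStronglyMeasurable (fun x => gaussianPDFReal m v x * f x) := fun m =>
    (stronglyMeasurable_gaussianPDFReal m v).aestronglyMeasurable.mul hf.aestronglyMeasurable
  have hint : Integrable (fun x => gaussianPDFReal μ v x * f x) :=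
    hf.bdd_mul (stronglyMeasurable_gaussianPDFReal μ v).aestronglyMeasurable
      (ae_of_all _ fun x => by
        rw [Real.norm_of_nonneg (gaussianPDFReal_nonneg μ v x)]; exact gaussianPDFReal_le μ v x)
  have hle : ∀ x, ∀ m ∈ Metric.ball μ 1,
      ‖gaussianPDFReal m v x * ((x - m) / v) * f x‖ ≤ bound x := by
    intro x m hm
    have hxm : |x - m| ≤ |x| + (|μ| + 1) := by
      have hdist : |m - μ| < 1 := by simpa [Real.dist_eq] using hm
      linarith [abs_sub x m, abs_sub_abs_le_abs_sub m μ]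
    rw [norm_mul, norm_mul, Real.norm_of_nonneg (gaussianPDFReal_nonneg m v x), Real.norm_eq_abs,
      Real.norm_eq_abs, abs_div, NNReal.abs_eq]
    calc gaussianPDFReal m v x * (|x - m| / v) * |f x|
        ≤ c * ((|x| + (|μ| + 1)) / v) * |f x| := by
          gcongr
          exact gaussianPDFReal_le m v x
      _ = bound x := by simp only [bound, abs_mul]; ring
  exact (hasDerivAt_integral_of_dominated_loc_of_deriv_le (Metric.ball_mem_nhds μ one_pos)
    (Eventually.of_forall hmeas) hint
    (((stronglyMeasurable_gaussianPDFReal μ v).aestronglyMeasurable.mul (by fun_prop)).mul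
      hf.aestronglyMeasurable)
    (ae_of_all _ hle) hbound
    (ae_of_all _ fun x m _ => (hasDerivAt_gaussianPDFReal_mean m v x).mul_const (f x))).2

lemma hasDerivAt_integral_gaussianReal_mean {f : ℝ → ℝ} (hf : Integrable f)
    (hf' : Integrable fun x => x * f x) {v : ℝ≥0} (hv : v ≠ 0) (μ : ℝ) :
    HasDerivAt (fun m => ∫ x, f x ∂gaussianReal m v)
      (∫ x, (x - μ) / v * f x ∂gaussianReal μ v) μ := by
  simp only [integral_gaussianReal_eq_integral_smul hv, smul_eq_mul, ← mul_assoc]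
  exact hasDerivAt_integral_gaussianPDFReal_mul hf hf' v μ

lemma integral_comp_add_mul_gaussianReal (g : ℝ → ℝ) (m : ℝ) {σ : ℝ} (hσ : σ ≠ 0)
    (μ : ℝ) (v : ℝ≥0) :
    ∫ z, g (m + σ * z) ∂gaussianReal μ v
      = ∫ x, g x ∂gaussianReal (m + σ * μ) (.mk (σ ^ 2) (sq_nonneg σ) * v) := by
  have hemb : MeasurableEmbedding fun z => m + σ * z :=
    (Homeomorph.addLeft m).measurableEmbedding.comp (Homeomorph.mulLeft₀ σ hσ).measurableEmbedding
  rw [← hemb.integral_map, show (fun z => m + σ * z) = (m + ·) ∘ (σ * ·) from rfl,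
    ← Measure.map_map (by fun_prop) (by fun_prop),
    gaussianReal_map_const_mul, gaussianReal_map_const_add, add_comm]

theorem stmt6_general (f : ℝ → ℝ) (hf : Differentiable ℝ f)
    (hdecay : Tendsto (fun x => f x * Real.exp (x ^ 2)) (cocompact ℝ) (nhds 0))
    (σ : ℝ) (hσ : 0 < σ) :
    ∀ μ : ℝ,
      HasDerivAt (fun m : ℝ => ∫ z, f (m + σ * z) ∂(gaussianReal 0 1))
        ((1 / σ) * ∫ z, f (μ + σ * z) * z ∂(gaussianReal 0 1)) μ := by
  intro μ
  obtain ⟨C, hC⟩ := exists_abs_le_mul_exp_neg_sq_of_tendsto hf.continuous hdecay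
  have hmeas := hf.continuous.aestronglyMeasurable (μ := volume)
  have hv : (.mk (σ ^ 2) (sq_nonneg σ) : ℝ≥0) ≠ 0 := by
    simpa [← NNReal.coe_eq_zero] using hσ.ne'
  have hG : ∀ (g : ℝ → ℝ) m, ∫ z, g (m + σ * z) ∂gaussianReal 0 1
      = ∫ x, g x ∂gaussianReal m (.mk (σ ^ 2) (sq_nonneg σ)) := fun g m => by
    simpa using integral_comp_add_mul_gaussianReal g m hσ.ne' 0 1
  simp only [hG]
  convert hasDerivAt_integral_gaussianReal_mean (integrable_of_abs_le_mul_exp_neg_sq hmeas hC)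
    (integrable_mul_of_abs_le_mul_exp_neg_sq hmeas hC) hv μ using 1
  rw [← hG (fun x => (x - μ) / _ * f x), ← integral_const_mul]
  congr 1 with z
  simp only [NNReal.coe_mk]
  field_simp
  ring

/-- Gaussian smoothing identity: derivative in the mean `μ` of
`G(μ) = ∫ f(μ + σ z) dγ(z)` for the standard Gaussian measure `γ`. -/
theorem stmt6 (f : ℝ → ℝ) (hf : Differentiable ℝ f)
    (hdecay : Tendsto (fun x => f x * Real.exp (x ^ 2)) (cocompact ℝ) (nhds 0))
    (hdecay' : Tendsto (fun x => deriv f x * Real.exp (x ^ 2)) (cocompact ℝ) (nhds 0))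
    (σ : ℝ) (hσ : 0 < σ) :
    ∀ μ : ℝ,
      HasDerivAt (fun m : ℝ => ∫ z, f (m + σ * z) ∂(gaussianReal 0 1))
        ((1 / σ) * ∫ z, f (μ + σ * z) * z ∂(gaussianReal 0 1)) μ :=
  stmt6_general f hf hdecay σ hσ
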